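/- arXiv:1809.05703 — 6 statements merged into one kernel-verified Lean document; each statement's English description precedes it below -/
import Mathlib

section
/- For every δ with 0 < δ < 1/4 and every ε with 0 < ε < 1 there exists a C¹ function τ : ℝ → ℝ such that τ(r) = 1 for r ≤ δε, τ(r) = 0 for r ≥ ε, 0 ≤ τ ≤ 1 everywhere, and there is a constant C (independent of δ and ε) with |τ'(r)| ≤ C · r⁻¹ · |log δ|⁻¹ for all r > 0. -/
open Real Filter Topology

lemma hasCompactSupport_deriv_smoothTransition : HasCompactSupport (deriv smoothTransition) := by
  refine HasCompactSupport.intro (isCompact_Icc (a := 0) (b := 1)) fun x hx ↦ ?_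
  rcases not_and_or.mp hx with hx₀ | hx₁
  · have : smoothTransition =ᶠ[𝓝 x] fun _ ↦ 0 := by
      filter_upwards [Iio_mem_nhds (not_le.mp hx₀)] with y hy
      exact smoothTransition.zero_of_nonpos hy.le
    rw [this.deriv_eq, deriv_const]
  · have : smoothTransition =ᶠ[𝓝 x] fun _ ↦ 1 := by
      filter_upwards [Ioi_mem_nhds (not_le.mp hx₁)] with y hy
      exact smoothTransition.one_of_one_le hy.le
    rw [this.deriv_eq, deriv_const]

lemma exists_abs_deriv_smoothTransition_le : ∃ M, 0 < M ∧ ∀ x, |deriv smoothTransition x| ≤ M := by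
  obtain ⟨M, hM⟩ := hasCompactSupport_deriv_smoothTransition.exists_bound_of_continuous
    (smoothTransition.contDiff (n := 1).continuous_deriv le_rfl)
  exact ⟨max M 1, by positivity, fun x ↦ (hM x).trans (le_max_left _ _)⟩

/-- The model `log (r / ε) / log δ`, equal to `1` at `r = δ ε` and `0` at `r = ε`, smoothed by
`smoothTransition` and made constant below `δ ε / 2` so that the logarithm only sees positive arguments. -/
noncomputable def logCutoff (δ ε r : ℝ) : ℝ :=
  smoothTransition ((log (max r (δ * ε / 2)) - log ε) / log δ)

section logCutoff

variable {δ ε r : ℝ}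

lemma logCutoff_eq_one (hδ : 0 < δ) (hδ₁ : δ < 1) (hε : 0 < ε) (hr : r ≤ δ * ε) :
    logCutoff δ ε r = 1 := by
  have hlogδ : log δ < 0 := log_neg hδ hδ₁
  refine smoothTransition.one_of_one_le ?_
  rw [le_div_iff_of_neg hlogδ, one_mul, sub_le_iff_le_add, ← log_mul hδ.ne' hε.ne']
  exact log_le_log (by positivity) (max_le hr (by linarith [mul_pos hδ hε]))

lemma logCutoff_eq_zero (hδ : 0 < δ) (hδ₁ : δ < 1) (hε : 0 < ε) (hr : ε ≤ r) :
    logCutoff δ ε r = 0 := by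
  have hmax : max r (δ * ε / 2) = r := max_eq_left (by nlinarith)
  refine smoothTransition.zero_of_nonpos (div_nonpos_of_nonneg_of_nonpos ?_ (log_neg hδ hδ₁).le)
  rw [hmax, sub_nonneg]
  exact log_le_log hε hr

lemma logCutoff_eventuallyEq_one (hδ : 0 < δ) (hδ₁ : δ < 1) (hε : 0 < ε) (hr : r < δ * ε) :
    logCutoff δ ε =ᶠ[𝓝 r] fun _ ↦ 1 := by
  filter_upwards [Iio_mem_nhds hr] with x hx
  exact logCutoff_eq_one hδ hδ₁ hε hx.le

lemma logCutoff_eventuallyEq (hr : δ * ε / 2 < r) :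
    logCutoff δ ε =ᶠ[𝓝 r] fun x ↦ smoothTransition ((log x - log ε) / log δ) := by
  filter_upwards [Ioi_mem_nhds hr] with x hx
  rw [logCutoff, max_eq_left hx.le]

lemma hasDerivAt_logCutoff (hr₀ : 0 < r) (hr : δ * ε / 2 < r) :
    HasDerivAt (logCutoff δ ε)
      (deriv smoothTransition ((log r - log ε) / log δ) * (r⁻¹ / log δ)) r := by
  have hF : HasDerivAt smoothTransition (deriv smoothTransition ((log r - log ε) / log δ))
      ((log r - log ε) / log δ) :=
    (smoothTransition.contDiff (n := 1).differentiable one_ne_zero).differentiableAt.hasDerivAt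
  exact (hF.comp (h := fun x ↦ (log x - log ε) / log δ) r
    (((hasDerivAt_log hr₀.ne').sub_const _).div_const _)).congr_of_eventuallyEq
    (logCutoff_eventuallyEq hr)

lemma contDiff_logCutoff {n : ℕ∞} (hδ : 0 < δ) (hδ₁ : δ < 1) (hε : 0 < ε) :
    ContDiff ℝ n (logCutoff δ ε) := by
  refine contDiff_iff_contDiffAt.mpr fun r ↦ ?_
  rcases lt_or_ge r (δ * ε) with hr | hr
  · exact contDiffAt_const.congr_of_eventuallyEq (logCutoff_eventuallyEq_one hδ hδ₁ hε hr)
  · have hr' : δ * ε / 2 < r := by linarith [mul_pos hδ hε]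
    refine ContDiffAt.congr_of_eventuallyEq ?_ (logCutoff_eventuallyEq hr')
    exact smoothTransition.contDiffAt.comp r <|
      ((contDiffAt_log.mpr (by linarith [mul_pos hδ hε])).sub contDiffAt_const).div_const _

lemma abs_deriv_logCutoff_le {M : ℝ} (hM : ∀ x, |deriv smoothTransition x| ≤ M)
    (hδ : 0 < δ) (hδ₁ : δ < 1) (hε : 0 < ε) (hr : 0 < r) :
    |deriv (logCutoff δ ε) r| ≤ M * r⁻¹ * |log δ|⁻¹ := by
  rcases lt_or_ge r (δ * ε) with hrδε | hrδε
  · rw [(logCutoff_eventuallyEq_one hδ hδ₁ hε hrδε).deriv_eq, deriv_const, abs_zero]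
    have := (abs_nonneg _).trans (hM 0)
    positivity
  · rw [(hasDerivAt_logCutoff hr (by linarith [mul_pos hδ hε])).deriv, abs_mul, abs_div,
      abs_inv, abs_of_pos hr, mul_div_assoc', div_eq_mul_inv _ |log δ|]
    gcongr
    exact hM _

end logCutoff

/-- Logarithmic cutoff lemma: there is a constant `C` (independent of `δ` and `ε`)
such that for all `0 < δ < 1/4` and `0 < ε < 1` there is a `C¹` function `τ : ℝ → ℝ`
with `τ = 1` on `(-∞, δε]`, `τ = 0` on `[ε, ∞)`, `0 ≤ τ ≤ 1`, and
`|τ'(r)| ≤ C · r⁻¹ · |log δ|⁻¹` for all `r > 0`. -/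
theorem log_cutoff_lemma :
    ∃ C : ℝ, 0 < C ∧
      ∀ δ ε : ℝ, 0 < δ → δ < 1/4 → 0 < ε → ε < 1 →
        ∃ τ : ℝ → ℝ, ContDiff ℝ 1 τ ∧
          (∀ r : ℝ, r ≤ δ * ε → τ r = 1) ∧
          (∀ r : ℝ, ε ≤ r → τ r = 0) ∧
          (∀ r : ℝ, 0 ≤ τ r ∧ τ r ≤ 1) ∧
          (∀ r : ℝ, 0 < r → |deriv τ r| ≤ C * r⁻¹ * |Real.log δ|⁻¹) := by
  obtain ⟨M, hM₀, hM⟩ := exists_abs_deriv_smoothTransition_le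
  refine ⟨M, hM₀, fun δ ε hδ hδ₄ hε _ ↦ ?_⟩
  have hδ₁ : δ < 1 := by linarith
  exact ⟨logCutoff δ ε, contDiff_logCutoff hδ hδ₁ hε,
    fun r ↦ logCutoff_eq_one hδ hδ₁ hε, fun r ↦ logCutoff_eq_zero hδ hδ₁ hε,
    fun r ↦ ⟨smoothTransition.nonneg _, smoothTransition.le_one _⟩,
    fun r ↦ abs_deriv_logCutoff_le hM hδ hδ₁ hε⟩
end

section
/- Let A ⊆ ℝⁿ be a closed set and define, for a ∈ A, the generalized tangent space TₐA as the intersection of kernels of differentials at a of C¹ functions vanishing on A near a. Then the function a ↦ dim TₐA is upper semicontinuous on A: every a ∈ A has a neighborhood U in ℝⁿ such that dim TₐA ≥ dim T_{a'}A for all a' ∈ A ∩ U. -/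
/-!
Since the ambient space is finite-dimensional, the intersection of kernels defining `T_a A` is
already attained by finitely many germs `f₁, …, f_k`, all defined on a common open
neighbourhood `V` of `a`. For `x ∈ V` these germs are also admissible at `x`, so `T_x A` lies in
the kernel of `Φ x := (d_x f₁, …, d_x f_k)`. The map `Φ` is continuous at `a` because the `fᵢ`
are `C¹`, and the rank of a linear map is lower semicontinuous, so
`dim T_x A ≤ dim ker Φ x ≤ dim ker Φ a = dim T_a A` near `a`.
-/

/-- The generalized tangent space of a set `A` at `a`, as a submodule: the intersection
of the kernels of the differentials at `a` of all `C¹` functions defined on an open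
neighborhood of `a` and vanishing on `A` there. -/
noncomputable def genTangent {E : Type*} [NormedAddCommGroup E] [NormedSpace ℝ E]
    (A : Set E) (a : E) : Submodule ℝ E :=
  ⨅ p ∈ {q : (E → ℝ) × Set E |
      IsOpen q.2 ∧ a ∈ q.2 ∧ ContDiffOn ℝ 1 q.1 q.2 ∧ ∀ x ∈ A ∩ q.2, q.1 x = 0},
    LinearMap.ker (fderivWithin ℝ p.1 p.2 a : E →ₗ[ℝ] ℝ)

open Filter Topology Module

theorem exists_finset_biInf_eq {α ι : Type*} [CompleteLattice α] [WellFoundedLT α]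
    (f : ι → α) (S : Set ι) : ∃ s : Finset ι, ↑s ⊆ S ∧ ⨅ i ∈ s, f i = ⨅ i ∈ S, f i := by
  classical
  obtain ⟨_, ⟨s, hsS, rfl⟩, hmin⟩ := wellFounded_lt.has_min
    ((fun s : Finset ι => ⨅ i ∈ s, f i) '' {s | ↑s ⊆ S}) ⟨_, ∅, by simp, rfl⟩
  refine ⟨s, hsS, le_antisymm (le_iInf₂ fun j hj => ?_) (biInf_mono fun i hi => hsS hi)⟩
  have hjs : insert j s ∈ {s : Finset ι | ↑s ⊆ S} := by
    simpa only [Set.mem_ofPred_eq, Finset.coe_insert] using Set.insert_subset hj hsS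
  have hinsert : ¬ f j ⊓ ⨅ i ∈ s, f i < ⨅ i ∈ s, f i := by
    simpa only [Finset.iInf_insert] using hmin _ ⟨insert j s, hjs, rfl⟩
  exact inf_eq_right.1 ((inf_le_right.lt_or_eq).resolve_left hinsert)

section RankSemicontinuity

variable {𝕜 : Type*} [NontriviallyNormedField 𝕜] [CompleteSpace 𝕜]
  {E F : Type*} [NormedAddCommGroup E] [NormedSpace 𝕜 E] [FiniteDimensional 𝕜 E]
  [NormedAddCommGroup F] [NormedSpace 𝕜 F] {X : Type*} [TopologicalSpace X] {a : X}

theorem ContinuousAt.eventually_finrank_range_le {Φ : X → E →L[𝕜] F} (hΦ : ContinuousAt Φ a) :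
    ∀ᶠ x in 𝓝 a, finrank 𝕜 (LinearMap.range (Φ a : E →ₗ[𝕜] F)) ≤
      finrank 𝕜 (LinearMap.range (Φ x : E →ₗ[𝕜] F)) := by
  have hrank (x : X) : (Φ x : E →ₗ[𝕜] F).rank = finrank 𝕜 (LinearMap.range (Φ x : E →ₗ[𝕜] F)) :=
    (finrank_eq_rank _ _).symm
  have hopen := isOpen_setOfPred_nat_le_rank (𝕜 := 𝕜) (E := E) (F := F)
    (finrank 𝕜 (LinearMap.range (Φ a : E →ₗ[𝕜] F)))
  filter_upwards [hΦ.preimage_mem_nhds (hopen.mem_nhds (hrank a).ge)] with x hx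
  simpa only [Set.mem_preimage, Set.mem_ofPred_eq, hrank, Nat.cast_le] using hx

theorem ContinuousAt.eventually_finrank_ker_le {Φ : X → E →L[𝕜] F} (hΦ : ContinuousAt Φ a) :
    ∀ᶠ x in 𝓝 a, finrank 𝕜 (LinearMap.ker (Φ x : E →ₗ[𝕜] F)) ≤
      finrank 𝕜 (LinearMap.ker (Φ a : E →ₗ[𝕜] F)) := by
  filter_upwards [hΦ.eventually_finrank_range_le] with x hx
  have := LinearMap.finrank_range_add_finrank_ker (Φ x : E →ₗ[𝕜] F)
  have := LinearMap.finrank_range_add_finrank_ker (Φ a : E →ₗ[𝕜] F)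
  omega

theorem eventually_finrank_iInf_ker_le {ι : Type*} [Finite ι] {φ : ι → X → E →L[𝕜] 𝕜}
    (hφ : ∀ i, ContinuousAt (φ i) a) :
    ∀ᶠ x in 𝓝 a, finrank 𝕜 ↥(⨅ i, LinearMap.ker (φ i x : E →ₗ[𝕜] 𝕜)) ≤
      finrank 𝕜 ↥(⨅ i, LinearMap.ker (φ i a : E →ₗ[𝕜] 𝕜)) := by
  cases nonempty_fintype ι
  have hker (x : X) : LinearMap.ker (ContinuousLinearMap.pi (φ · x) : E →ₗ[𝕜] (ι → 𝕜)) =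
      ⨅ i, LinearMap.ker (φ i x : E →ₗ[𝕜] 𝕜) := by
    rw [ContinuousLinearMap.coe_pi, LinearMap.ker_pi]
  have hcont : ContinuousAt (fun x => ContinuousLinearMap.pi (φ · x)) a :=
    continuousAt_clm_apply.2 fun v => continuousAt_pi.2 fun i => (hφ i).clm_apply continuousAt_const
  filter_upwards [hcont.eventually_finrank_ker_le] with x hx
  rwa [hker, hker] at hx

end RankSemicontinuity

section GenTangent

variable {E : Type*} [NormedAddCommGroup E] [NormedSpace ℝ E] {A : Set E} {a x : E}
  {p : (E → ℝ) × Set E}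

def IsVanishingC1Germ (A : Set E) (a : E) (p : (E → ℝ) × Set E) : Prop :=
  IsOpen p.2 ∧ a ∈ p.2 ∧ ContDiffOn ℝ 1 p.1 p.2 ∧ ∀ x ∈ A ∩ p.2, p.1 x = 0

theorem IsVanishingC1Germ.of_mem (hp : IsVanishingC1Germ A a p) (hx : x ∈ p.2) :
    IsVanishingC1Germ A x p :=
  ⟨hp.1, hx, hp.2.2⟩

theorem IsVanishingC1Germ.continuousAt_fderiv (hp : IsVanishingC1Germ A a p) :
    ContinuousAt (fderiv ℝ p.1) a :=
  (hp.2.2.1.continuousOn_fderiv_of_isOpen hp.1 le_rfl).continuousAt (hp.1.mem_nhds hp.2.1)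

theorem genTangent_eq_biInf (A : Set E) (a : E) :
    genTangent A a = ⨅ p ∈ {p | IsVanishingC1Germ A a p},
      LinearMap.ker (fderivWithin ℝ p.1 p.2 a : E →ₗ[ℝ] ℝ) :=
  rfl

theorem genTangent_le_ker_fderiv (hp : IsVanishingC1Germ A a p) :
    genTangent A a ≤ LinearMap.ker (fderiv ℝ p.1 a : E →ₗ[ℝ] ℝ) := by
  rw [← fderivWithin_of_isOpen hp.1 hp.2.1]
  exact iInf₂_le p hp

theorem exists_finset_genTangent_eq_iInf_ker [FiniteDimensional ℝ E] (A : Set E) (a : E) :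
    ∃ s : Finset ((E → ℝ) × Set E), (∀ p ∈ s, IsVanishingC1Germ A a p) ∧
      genTangent A a = ⨅ p : s, LinearMap.ker (fderiv ℝ p.1.1 a : E →ₗ[ℝ] ℝ) := by
  obtain ⟨s, hs, hs_eq⟩ := exists_finset_biInf_eq
    (fun p => LinearMap.ker (fderivWithin ℝ p.1 p.2 a : E →ₗ[ℝ] ℝ)) {p | IsVanishingC1Germ A a p}
  refine ⟨s, fun p hp => hs hp, ?_⟩
  rw [genTangent_eq_biInf, ← hs_eq, iInf_subtype']
  refine iInf_congr fun p => ?_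
  rw [fderivWithin_of_isOpen (hs p.2).1 (hs p.2).2.1]

theorem eventually_finrank_genTangent_le [FiniteDimensional ℝ E] (A : Set E) (a : E) :
    ∀ᶠ x in 𝓝 a, finrank ℝ (genTangent A x) ≤ finrank ℝ (genTangent A a) := by
  obtain ⟨s, hs, hs_eq⟩ := exists_finset_genTangent_eq_iInf_ker A a
  have hmem : ∀ᶠ x in 𝓝 a, ∀ p : s, x ∈ p.1.2 :=
    eventually_all.2 fun p => (hs p p.2).1.mem_nhds (hs p p.2).2.1
  have hker := eventually_finrank_iInf_ker_le fun p : s => (hs p p.2).continuousAt_fderiv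
  filter_upwards [hmem, hker] with x hx hrank
  calc finrank ℝ (genTangent A x)
      ≤ finrank ℝ ↥(⨅ p : s, LinearMap.ker (fderiv ℝ p.1.1 x : E →ₗ[ℝ] ℝ)) :=
        Submodule.finrank_mono (le_iInf fun p => genTangent_le_ker_fderiv ((hs p p.2).of_mem (hx p)))
    _ ≤ finrank ℝ ↥(⨅ p : s, LinearMap.ker (fderiv ℝ p.1.1 a : E →ₗ[ℝ] ℝ)) := hrank
    _ = finrank ℝ (genTangent A a) := by rw [hs_eq]

end GenTangent

theorem genTangent_dim_upperSemicontinuous_general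
    (n : ℕ) (A : Set (EuclideanSpace ℝ (Fin n))) :
    ∀ a ∈ A, ∃ U : Set (EuclideanSpace ℝ (Fin n)), IsOpen U ∧ a ∈ U ∧
      ∀ a' ∈ A ∩ U,
        Module.finrank ℝ (genTangent A a') ≤ Module.finrank ℝ (genTangent A a) := by
  intro a _
  obtain ⟨U, hU, hU_open, haU⟩ := eventually_nhds_iff.1 (eventually_finrank_genTangent_le A a)
  exact ⟨U, hU_open, haU, fun a' ha' => hU a' ha'.2⟩

/-- Upper semicontinuity of the dimension of the generalized tangent space: every
`a ∈ A` has a neighborhood `U` in `ℝⁿ` such that `dim T_{a'}A ≤ dim TₐA` for all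
`a' ∈ A ∩ U`. -/
theorem genTangent_dim_upperSemicontinuous
    (n : ℕ) (A : Set (EuclideanSpace ℝ (Fin n))) (hA : IsClosed A) :
    ∀ a ∈ A, ∃ U : Set (EuclideanSpace ℝ (Fin n)), IsOpen U ∧ a ∈ U ∧
      ∀ a' ∈ A ∩ U,
        Module.finrank ℝ (genTangent A a') ≤ Module.finrank ℝ (genTangent A a) :=
  genTangent_dim_upperSemicontinuous_general n A
end

section
/- Let A ⊆ ℝⁿ be closed, K ⊆ A compact, k ≥ 1, and F a C^k function defined on a neighborhood U of A whose (k−1)-jet vanishes on A ∩ U. For a ∈ A ∩ U let 𝒯_{a,k}F(x) = Σ_{|β| = k} (1/β!) D^β F(a) (x − a)^β be the k-th Taylor polynomial of F at a. Then there is a constant C_K > 0 such that for all a ∈ K and all x ∈ B(1, a): |𝒯_{a,k}F(x)| ≤ C_K · r_a(x)^k, where r_a(x) = dist(x, a + TₐA) is the distance to the affine generalized tangent space at a. -/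
open Equiv Function Metric

section Symmetry

variable {𝕜 E F : Type*} [NontriviallyNormedField 𝕜]
  [NormedAddCommGroup E] [NormedSpace 𝕜 E] [NormedAddCommGroup F] [NormedSpace 𝕜 F]
  {f : E → F} {x : E}

theorem fderiv_fderiv_iteratedFDeriv_apply {n : ℕ} (u w : E) (c : Fin n → E) :
    fderiv 𝕜 (fderiv 𝕜 (iteratedFDeriv 𝕜 n f)) x u w c =
      iteratedFDeriv 𝕜 (n + 2) f x (Fin.cons u (Fin.cons w c)) := by
  -- the spaces are named explicitly, otherwise the normed-group instances fail to unify
  have h := LinearIsometryEquiv.comp_fderiv (𝕜 := 𝕜) (E := E [×n+1]→L[𝕜] F)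
    (F := E →L[𝕜] E [×n]→L[𝕜] F)
    (iso := continuousMultilinearCurryLeftEquiv 𝕜 (fun _ : Fin (n + 1) => E) F)
    (f := iteratedFDeriv 𝕜 (n + 1) f) (x := x)
  rw [fderiv_iteratedFDeriv, h, iteratedFDeriv_succ_apply_left]
  rfl

variable [IsRCLikeNormedField 𝕜]

theorem ContDiffAt.iteratedFDeriv_comp_swap_zero_one {n : ℕ} (hf : ContDiffAt 𝕜 (n + 2) f x)
    (v : Fin (n + 2) → E) :
    iteratedFDeriv 𝕜 (n + 2) f x (v ∘ swap 0 1) = iteratedFDeriv 𝕜 (n + 2) f x v := by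
  have hsymm : IsSymmSndFDerivAt 𝕜 (iteratedFDeriv 𝕜 n f) x :=
    (hf.iteratedFDeriv_right (by rw [add_comm])).isSymmSndFDerivAt (by simp)
  have hv : v ∘ swap 0 1 = Fin.cons (v 1) (Fin.cons (v 0) fun i => v i.succ.succ) := by
    ext i
    refine Fin.cases ?_ (Fin.cases ?_ fun j => ?_) i
    · simp
    · simp
    · rw [comp_apply, swap_apply_of_ne_of_ne (Fin.succ_ne_zero _) (by simp [Fin.ext_iff])]
      rfl
  conv_rhs => rw [← Fin.cons_self_tail v, ← Fin.cons_self_tail (Fin.tail v)]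
  rw [hv, ← fderiv_fderiv_iteratedFDeriv_apply, ← fderiv_fderiv_iteratedFDeriv_apply, hsymm.eq]
  rfl

theorem ContDiffAt.iteratedFDeriv_comp_swap_castSucc_succ {n : ℕ}
    (hf : ContDiffAt 𝕜 (n + 1) f x) (i : Fin n) (v : Fin (n + 1) → E) :
    iteratedFDeriv 𝕜 (n + 1) f x (v ∘ swap i.castSucc i.succ) =
      iteratedFDeriv 𝕜 (n + 1) f x v := by
  induction n generalizing x with
  | zero => exact i.elim0
  | succ n ih =>
    cases i using Fin.cases with
    | zero => exact hf.iteratedFDeriv_comp_swap_zero_one v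
    | succ i =>
      have hnear : ∀ᶠ y in nhds x, ContinuousMultilinearMap.domDomCongrₗᵢ 𝕜 E F
          (swap i.castSucc i.succ) (iteratedFDeriv 𝕜 (n + 1) f y) =
            iteratedFDeriv 𝕜 (n + 1) f y := by
        filter_upwards [hf.eventually (by simp)] with y hy
        ext c
        exact ih (hy.of_le (by norm_cast; omega)) i c
      have hderiv : fderiv 𝕜 (iteratedFDeriv 𝕜 (n + 1) f) x =
          (ContinuousMultilinearMap.domDomCongrₗᵢ 𝕜 E F (swap i.castSucc i.succ) :
            _ →L[𝕜] _).comp (fderiv 𝕜 (iteratedFDeriv 𝕜 (n + 1) f) x) := by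
        rw [← LinearIsometryEquiv.comp_fderiv]
        exact (Filter.EventuallyEq.fderiv_eq hnear).symm
      have h0 : (v ∘ swap i.succ.castSucc i.succ.succ) 0 = v 0 := by
        simp [swap_apply_of_ne_of_ne, Fin.ext_iff]
      have htail : Fin.tail (v ∘ swap i.succ.castSucc i.succ.succ) =
          Fin.tail v ∘ swap i.castSucc i.succ := by
        ext j
        simp [Fin.tail, (Fin.succ_injective _).swap_apply]
      rw [iteratedFDeriv_succ_apply_left, iteratedFDeriv_succ_apply_left, h0, htail]
      conv_rhs => rw [hderiv]
      rfl

theorem ContDiffAt.iteratedFDeriv_comp_perm' {n : ℕ} (hf : ContDiffAt 𝕜 n f x)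
    (v : Fin n → E) (σ : Perm (Fin n)) :
    iteratedFDeriv 𝕜 n f x (v ∘ σ) = iteratedFDeriv 𝕜 n f x v := by
  cases n with
  | zero => exact congrArg _ (Subsingleton.elim _ _)
  | succ n =>
    have hσ : σ ∈ Submonoid.closure (Set.range fun i : Fin n => swap i.castSucc i.succ) := by
      rw [Perm.mclosure_swap_castSucc_succ]
      trivial
    induction hσ using Submonoid.closure_induction generalizing v with
    | mem _ h =>
      obtain ⟨i, rfl⟩ := h
      exact hf.iteratedFDeriv_comp_swap_castSucc_succ i v
    | one => rfl
    | mul σ τ _ _ hσ hτ => rw [Perm.coe_mul, ← comp_assoc, hτ, hσ]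

end Symmetry

theorem MultilinearMap.apply_const_add_eq_of_forall_eq_zero {R ι M N : Type*} [CommSemiring R]
    [AddCommMonoid M] [Module R M] [AddCommMonoid N] [Module R N] [Fintype ι]
    (f : MultilinearMap R (fun _ : ι => M) N) {t : M} (hf : ∀ m i, m i = t → f m = 0) (u : M) :
    f (fun _ => u + t) = f (fun _ => u) := by
  classical
  rw [show (fun _ => u + t) = (fun _ : ι => u) + fun _ => t from rfl, f.map_add_univ,
    Finset.sum_eq_single Finset.univ]
  · simp
  · intro s _ hs
    obtain ⟨i, hi⟩ : ∃ i, i ∉ s := by simpa [Finset.eq_univ_iff_forall] using hs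
    exact hf _ i (by simp [hi])
  · simp

variable {E : Type*} [NormedAddCommGroup E] [NormedSpace ℝ E] {A U : Set E} {a : E}

theorem fderiv_apply_eq_zero_of_mem_genTangent {g : E → ℝ} {v : E} (hU : IsOpen U) (ha : a ∈ U)
    (hg : ContDiffOn ℝ 1 g U) (hgA : ∀ x ∈ A ∩ U, g x = 0) (hv : v ∈ genTangent A a) :
    fderiv ℝ g a v = 0 := by
  simp only [genTangent, Submodule.mem_iInf] at hv
  rw [← fderivWithin_of_isOpen hU ha]
  exact hv (g, U) ⟨hU, ha, hg, hgA⟩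

theorem fderiv_iteratedFDeriv_apply_eq_zero_of_mem_genTangent {F : E → ℝ} {j : ℕ} {v : E}
    (hU : IsOpen U) (hF : ContDiffOn ℝ (j + 1) F U)
    (hjet : ∀ x ∈ A ∩ U, iteratedFDeriv ℝ j F x = 0) (ha : a ∈ U) (hv : v ∈ genTangent A a) :
    fderiv ℝ (iteratedFDeriv ℝ j F) a v = 0 := by
  have hC1 : ∀ y ∈ U, ContDiffAt ℝ 1 (iteratedFDeriv ℝ j F) y := fun y hy =>
    (hF.contDiffAt (hU.mem_nhds hy)).iteratedFDeriv_right (by rw [add_comm])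
  ext c
  rw [← fderiv_continuousMultilinear_apply_const_apply ((hC1 a ha).differentiableAt one_ne_zero)]
  refine fderiv_apply_eq_zero_of_mem_genTangent hU ha (fun y hy => ?_) (fun x hx => ?_) hv
  · exact ((ContinuousMultilinearMap.apply ℝ _ ℝ c).contDiff.contDiffAt.comp y
      (hC1 y hy)).contDiffWithinAt
  · simp [hjet x hx]

theorem iteratedFDeriv_apply_eq_zero_of_mem_genTangent {F : E → ℝ} {k : ℕ} (hU : IsOpen U)
    (hF : ContDiffOn ℝ k F U) (hjet : ∀ x ∈ A ∩ U, iteratedFDeriv ℝ (k - 1) F x = 0)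
    (ha : a ∈ U) (m : Fin k → E) (i : Fin k) (hi : m i ∈ genTangent A a) :
    iteratedFDeriv ℝ k F a m = 0 := by
  obtain ⟨j, rfl⟩ : ∃ j, k = j + 1 := ⟨k - 1, by have := i.isLt; omega⟩
  rw [← (hF.contDiffAt (hU.mem_nhds ha)).iteratedFDeriv_comp_perm' m (swap 0 i),
    iteratedFDeriv_succ_apply_left, comp_apply, swap_apply_left,
    fderiv_iteratedFDeriv_apply_eq_zero_of_mem_genTangent hU (mod_cast hF)
      (by simpa using hjet) ha hi]
  rfl

theorem abs_iteratedFDeriv_apply_const_le_infDist_genTangent [FiniteDimensional ℝ E]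
    {F : E → ℝ} {k : ℕ} (hU : IsOpen U) (hF : ContDiffOn ℝ k F U)
    (hjet : ∀ x ∈ A ∩ U, iteratedFDeriv ℝ (k - 1) F x = 0) (ha : a ∈ U) (x : E) :
    |iteratedFDeriv ℝ k F a (fun _ => x - a)| ≤
      ‖iteratedFDeriv ℝ k F a‖ * infDist x ((a + ·) '' genTangent A a) ^ k := by
  set T := genTangent A a
  obtain ⟨t, ht, hdist⟩ :=
    T.closed_of_finiteDimensional.exists_infDist_eq_dist ⟨0, T.zero_mem⟩ (x - a)
  have himg : infDist x ((a + ·) '' T) = infDist (x - a) T := by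
    rw [← infDist_image (isometry_add_left a) (x := x - a), add_sub_cancel]
  have hshift : iteratedFDeriv ℝ k F a (fun _ => x - a) =
      iteratedFDeriv ℝ k F a (fun _ => x - a - t) := by
    rw [sub_eq_add_neg (x - a) t]
    refine ((iteratedFDeriv ℝ k F a).toMultilinearMap.apply_const_add_eq_of_forall_eq_zero
      (fun m i hi => ?_) _).symm
    exact iteratedFDeriv_apply_eq_zero_of_mem_genTangent hU hF hjet ha m i (hi ▸ T.neg_mem ht)
  rw [← Real.norm_eq_abs, hshift, himg, hdist, dist_eq_norm]
  exact (iteratedFDeriv ℝ k F a).le_opNorm_mul_pow_of_le (pi_norm_const_le _)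

theorem taylor_genTangent_estimate_general (n k : ℕ)
    (A : Set (EuclideanSpace ℝ (Fin n)))
    (K : Set (EuclideanSpace ℝ (Fin n))) (hK : IsCompact K) (hKA : K ⊆ A)
    (U : Set (EuclideanSpace ℝ (Fin n))) (hU : IsOpen U) (hAU : A ⊆ U)
    (F : EuclideanSpace ℝ (Fin n) → ℝ) (hF : ContDiffOn ℝ k F U)
    (hjet : ∀ j : ℕ, j ≤ k - 1 → ∀ x ∈ A ∩ U, iteratedFDerivWithin ℝ j F U x = 0) :
    ∃ C : ℝ, 0 < C ∧ ∀ a ∈ K, ∀ x ∈ Metric.ball a 1,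
      |((k.factorial : ℝ))⁻¹ • (iteratedFDerivWithin ℝ k F U a (fun _ => x - a))| ≤
        C * Metric.infDist x ((fun v => a + v) ''
              (genTangent A a : Set (EuclideanSpace ℝ (Fin n)))) ^ k := by
  have hKU : K ⊆ U := hKA.trans hAU
  obtain ⟨C₀, hC₀⟩ : ∃ C₀, ∀ a ∈ K, ‖iteratedFDeriv ℝ k F a‖ ≤ C₀ :=
    hK.exists_bound_of_continuousOn fun y hy =>
      ((hF.contDiffAt (hU.mem_nhds (hKU hy))).continuousAt_iteratedFDeriv
        le_rfl).continuousWithinAt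
  have hjet' : ∀ y ∈ A ∩ U, iteratedFDeriv ℝ (k - 1) F y = 0 := fun y hy => by
    rw [← iteratedFDerivWithin_of_isOpen _ hU hy.2]
    exact hjet _ le_rfl y hy
  refine ⟨(k.factorial : ℝ)⁻¹ * max C₀ 1, by positivity, fun a ha x _ => ?_⟩
  rw [iteratedFDerivWithin_of_isOpen k hU (hKU ha), smul_eq_mul, abs_mul,
    abs_of_pos (by positivity), mul_assoc]
  gcongr
  calc _ ≤ ‖iteratedFDeriv ℝ k F a‖ * infDist x ((a + ·) '' genTangent A a) ^ k :=
        abs_iteratedFDeriv_apply_const_le_infDist_genTangent hU hF hjet' (hKU ha) x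
    _ ≤ max C₀ 1 * _ :=
        mul_le_mul_of_nonneg_right ((hC₀ a ha).trans (le_max_left _ _))
          (pow_nonneg infDist_nonneg k)

/-- Improved Taylor estimate along generalized tangent spaces: let `A ⊆ ℝⁿ` be closed,
`K ⊆ A` compact, `k ≥ 1`, and `F` a `C^k` function on an open neighborhood `U` of `A`
whose `(k−1)`-jet vanishes on `A ∩ U`.  Since the `(k−1)`-jet of `F` vanishes at `a`,
the `k`-th Taylor polynomial of `F` at `a ∈ A ∩ U` is its homogeneous degree-`k` term
`𝒯_{a,k}F(x) = (1/k!)·D^k F(a)[x−a,…,x−a]`.  Then there is `C_K > 0` such that for all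
`a ∈ K` and `x ∈ B(1,a)`: `|𝒯_{a,k}F(x)| ≤ C_K · dist(x, a + TₐA)^k`. -/
theorem taylor_genTangent_estimate (n k : ℕ) (hk : 1 ≤ k)
    (A : Set (EuclideanSpace ℝ (Fin n))) (hA : IsClosed A)
    (K : Set (EuclideanSpace ℝ (Fin n))) (hK : IsCompact K) (hKA : K ⊆ A)
    (U : Set (EuclideanSpace ℝ (Fin n))) (hU : IsOpen U) (hAU : A ⊆ U)
    (F : EuclideanSpace ℝ (Fin n) → ℝ) (hF : ContDiffOn ℝ k F U)
    (hjet : ∀ j : ℕ, j ≤ k - 1 → ∀ x ∈ A ∩ U, iteratedFDerivWithin ℝ j F U x = 0) :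
    ∃ C : ℝ, 0 < C ∧ ∀ a ∈ K, ∀ x ∈ Metric.ball a 1,
      |((k.factorial : ℝ))⁻¹ • (iteratedFDerivWithin ℝ k F U a (fun _ => x - a))| ≤
        C * Metric.infDist x ((fun v => a + v) ''
              (genTangent A a : Set (EuclideanSpace ℝ (Fin n)))) ^ k :=
  taylor_genTangent_estimate_general n k A K hK hKA U hU hAU F hF hjet
end

section
/- Let f : [0,1] → ℝ be continuous, ε > 0, and K ∈ ℝ. Then there exists a Lipschitz function f̂ : [0,1] → ℝ with |f(x) − f̂(x)| < ε for all x ∈ [0,1], such that f̂ is differentiable with derivative identically equal to K on some open dense subset of [0,1]. -/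
open MeasureTheory Set Topology intervalIntegral
open scoped NNReal ENNReal Interval

/- Approximate `f` within `ε / 2` by a polynomial `p` and choose an open set `U ⊆ (0, 1)`,
dense in `[0, 1]` because it contains a countable dense set, of measure so small that
`fh := p + ∫₀ˣ 𝟙_U (K - p')` stays within `ε / 2` of `p`. On `U` the fundamental theorem of
calculus gives `fh' = p' + (K - p') = K`, and `fh` is Lipschitz since `p` is and the integrand
is bounded. -/

theorem exists_isOpen_subset_subset_closure_measure_lt {X : Type*} [TopologicalSpace X]
    [TopologicalSpace.SeparableSpace X] [MeasurableSpace X] (μ : Measure X) [μ.OuterRegular]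
    [NullSingletonClass μ] {V : Set X} (hV : IsOpen V) {δ : ℝ≥0∞} (hδ : 0 < δ) :
    ∃ U, IsOpen U ∧ U ⊆ V ∧ V ⊆ closure U ∧ μ U < δ := by
  obtain ⟨s, hs_countable, hs_dense⟩ := TopologicalSpace.exists_countable_dense X
  obtain ⟨W, hsW, hW, hWδ⟩ :=
    s.exists_isOpen_lt_of_lt δ (by rwa [hs_countable.measure_zero μ])
  refine ⟨V ∩ W, hV.inter hW, inter_subset_left, ?_,
    (measure_mono inter_subset_right).trans_lt hWδ⟩
  exact (hs_dense.open_subset_closure_inter hV).trans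
    (closure_mono (inter_subset_inter_right V hsW))

section Primitive

variable {E : Type*} [NormedAddCommGroup E] [NormedSpace ℝ E]

theorem norm_intervalIntegral_indicator_le {μ : Measure ℝ} {U : Set ℝ} (hU : MeasurableSet U)
    (hμU : μ U ≠ ∞) {ψ : ℝ → E} {C : ℝ≥0} (hψ : ∀ t ∈ U, ‖ψ t‖ ≤ C) (a b : ℝ) :
    ‖∫ t in a..b, U.indicator ψ t ∂μ‖ ≤ C * μ.real U := by
  have hμU' : μ (Ι a b ∩ U) ≠ ∞ := measure_ne_top_of_subset inter_subset_right hμU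
  rw [norm_integral_eq_norm_integral_uIoc, setIntegral_indicator hU]
  calc ‖∫ t in Ι a b ∩ U, ψ t ∂μ‖ ≤ C * μ.real (Ι a b ∩ U) :=
        norm_setIntegral_le_of_norm_le_const hμU'.lt_top fun t ht => hψ t ht.2
    _ ≤ C * μ.real U := by gcongr; exact inter_subset_right

theorem lipschitzWith_intervalIntegral_of_norm_le {φ : ℝ → E} (hφ : LocallyIntegrable φ)
    {C : ℝ≥0} (hφC : ∀ t, ‖φ t‖ ≤ C) (a : ℝ) :
    LipschitzWith C fun x => ∫ t in a..x, φ t := by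
  have hφ_int : ∀ x y, IntervalIntegrable φ volume x y := fun x y =>
    (hφ.integrableOn_isCompact isCompact_uIcc).intervalIntegrable
  refine LipschitzWith.of_dist_le_mul fun x y => ?_
  rw [dist_eq_norm, integral_interval_sub_left (hφ_int a x) (hφ_int a y), Real.dist_eq]
  exact norm_integral_le_of_norm_le_const fun t _ => hφC t

variable [CompleteSpace E]

theorem hasDerivAt_intervalIntegral_indicator {U : Set ℝ} (hU : IsOpen U) {ψ : ℝ → E}
    (hψ : Continuous ψ) (a : ℝ) {x : ℝ} (hx : x ∈ U) :
    HasDerivAt (fun u => ∫ t in a..u, U.indicator ψ t) (ψ x) x := by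
  have hφ_cont : ContinuousOn (U.indicator ψ) U :=
    hψ.continuousOn.congr fun t ht => indicator_of_mem ht ψ
  have hφ_int := ((hψ.locallyIntegrable (μ := volume)).indicator
    hU.measurableSet).integrableOn_isCompact (isCompact_uIcc (a := a) (b := x))
  simpa [indicator_of_mem hx] using integral_hasDerivAt_right hφ_int.intervalIntegrable
    (hφ_cont.stronglyMeasurableAtFilter hU x hx) (hφ_cont.continuousAt (hU.mem_nhds hx))

end Primitive

/-- Counter-intuitive approximation of continuous functions: every continuous
`f : [0,1] → ℝ` can be uniformly `ε`-approximated by a Lipschitz function `f̂` which,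
on an open subset of `[0,1]` that is dense in `[0,1]`, is differentiable with
derivative identically equal to a prescribed constant `K`. -/
theorem lipschitz_approx_prescribed_deriv
    (f : ℝ → ℝ) (hf : ContinuousOn f (Set.Icc 0 1)) (ε : ℝ) (hε : 0 < ε) (K : ℝ) :
    ∃ (fh : ℝ → ℝ) (L : NNReal), LipschitzOnWith L fh (Set.Icc 0 1) ∧
      (∀ x ∈ Set.Icc (0 : ℝ) 1, |f x - fh x| < ε) ∧
      ∃ U : Set ℝ, IsOpen U ∧ U ⊆ Set.Icc 0 1 ∧ Set.Icc (0 : ℝ) 1 ⊆ closure U ∧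
        ∀ x ∈ U, HasDerivAt fh K x := by
  obtain ⟨p, hp⟩ := exists_polynomial_near_of_continuousOn 0 1 f hf (ε / 2) (half_pos hε)
  set ψ : ℝ → ℝ := fun t => K - p.derivative.eval t
  have hψ : Continuous ψ := continuous_const.sub p.derivative.continuous
  obtain ⟨C, hC⟩ : ∃ C : ℝ≥0, ∀ t ∈ Icc (0 : ℝ) 1, ‖ψ t‖ ≤ C := by
    obtain ⟨C, hC⟩ := isCompact_Icc.exists_bound_of_continuousOn hψ.continuousOn
    exact ⟨C.toNNReal, fun t ht => (hC t ht).trans (Real.le_coe_toNNReal C)⟩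
  set η := ε / 2 / (C + 1)
  obtain ⟨U, hU, hU_sub, hU_dense, hU_vol⟩ := exists_isOpen_subset_subset_closure_measure_lt
    (volume : Measure ℝ) isOpen_Ioo (ENNReal.ofReal_pos.2 (by positivity : 0 < η))
  have hψU : ∀ t ∈ U, ‖ψ t‖ ≤ C := fun t ht => hC t (Ioo_subset_Icc_self (hU_sub ht))
  set F : ℝ → ℝ := fun x => ∫ t in (0 : ℝ)..x, U.indicator ψ t
  have hF_small (x : ℝ) : |F x| < ε / 2 :=
    calc |F x| ≤ C * volume.real U := norm_intervalIntegral_indicator_le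
          hU.measurableSet (measure_ne_top_of_subset hU_sub measure_Ioo_lt_top.ne) hψU 0 x
      _ ≤ C * η := by gcongr; exact (ENNReal.toReal_lt_of_lt_ofReal hU_vol).le
      _ < ε / 2 := by rw [mul_div_assoc', div_lt_iff₀ (by positivity)]; nlinarith
  obtain ⟨Lp, hLp⟩ : ∃ L, LipschitzOnWith L (fun x => p.eval x) (Icc 0 1) :=
    (p.contDiff_aeval 1).locallyLipschitz.locallyLipschitzOn.exists_lipschitzOnWith_of_compact
      isCompact_Icc
  refine ⟨fun x => p.eval x + F x, Lp + C, hLp.add ?_, fun x hx => ?_,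
    U, hU, hU_sub.trans Ioo_subset_Icc_self, ?_, fun x hx => ?_⟩
  · exact (lipschitzWith_intervalIntegral_of_norm_le
      (hψ.locallyIntegrable.indicator hU.measurableSet) (fun t => (norm_indicator_eq_indicator_norm
        ψ t).trans_le (indicator_apply_le' (hψU t) fun _ => C.2)) 0).lipschitzOnWith
  · calc |f x - (p.eval x + F x)| ≤ |f x - p.eval x| + |F x| := by
          rw [← sub_sub]; exact abs_sub _ _
      _ < ε / 2 + ε / 2 := add_lt_add (abs_sub_comm (f x) _ ▸ hp x hx) (hF_small x)
      _ = ε := add_halves ε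
  · exact closure_Ioo (zero_ne_one (α := ℝ)) ▸ closure_minimal hU_dense isClosed_closure
  · exact ((p.hasDerivAt x).add (hasDerivAt_intervalIntegral_indicator hU hψ 0 hx)).congr_deriv
      (add_sub_cancel _ K)
end

section
/- There exists a Lipschitz function f̂ : [0,1] → ℝ with f̂(0) < 0.0001, f̂(1) > 0.9999, and an open dense subset 𝒰 ⊆ [0,1] such that f̂ is differentiable with f̂'(x) = 0 for all x ∈ 𝒰. In particular, 𝒰 does not have full Lebesgue measure, since ∫₀¹ f̂'(x) dx = f̂(1) − f̂(0) > 0.9998 by the fundamental theorem of calculus for Lipschitz functions. -/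
/-!
Outer regularity gives an open set `U`, dense in `[0,1]`, of measure `< 10⁻⁴`: a small
neighbourhood of a countable dense set. Take `f̂ x = |[0,x] \ U|`, the primitive of the indicator
of `Uᶜ`. It is `1`-Lipschitz, locally constant on the open set `U`, and `f̂ 1 = 1 - |U|`.
-/

open MeasureTheory Set Filter Topology
open scoped ENNReal

theorem exists_isOpen_dense_measure_lt {α : Type*} [TopologicalSpace α]
    [TopologicalSpace.SeparableSpace α] [MeasurableSpace α] (μ : Measure α) [μ.OuterRegular]
    [NullSingletonClass μ] {ε : ℝ≥0∞} (hε : 0 < ε) :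
    ∃ U : Set α, IsOpen U ∧ Dense U ∧ μ U < ε := by
  obtain ⟨D, hD_countable, hD_dense⟩ := TopologicalSpace.exists_countable_dense α
  obtain ⟨U, hDU, hU_open, hμU⟩ :=
    D.exists_isOpen_lt_of_lt ε ((hD_countable.measure_zero μ).trans_lt hε)
  exact ⟨U, hU_open, hD_dense.mono hDU, hμU⟩

theorem exists_isOpen_subset_Ioo_dense_volume_lt {a b : ℝ} (hab : a < b) {ε : ℝ≥0∞}
    (hε : 0 < ε) :
    ∃ U : Set ℝ, IsOpen U ∧ U ⊆ Ioo a b ∧ Icc a b ⊆ closure U ∧ volume U < ε := by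
  obtain ⟨W, hW_open, hW_dense, hW_small⟩ :=
    exists_isOpen_dense_measure_lt (volume : Measure ℝ) hε
  refine ⟨Ioo a b ∩ W, isOpen_Ioo.inter hW_open, inter_subset_left, ?_,
    (measure_mono inter_subset_right).trans_lt hW_small⟩
  rw [← closure_Ioo hab.ne]
  exact closure_minimal (hW_dense.open_subset_closure_inter isOpen_Ioo) isClosed_closure

section IndicatorPrimitive

variable {s : Set ℝ}

theorem intervalIntegrable_indicator_one (hs : MeasurableSet s) (a b : ℝ) :
    IntervalIntegrable (s.indicator (1 : ℝ → ℝ)) volume a b :=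
  (intervalIntegrable_const (c := (1 : ℝ))).mono_fun
    (measurable_one.indicator hs).aestronglyMeasurable
    (ae_of_all _ fun t => norm_indicator_le_norm_self 1 t)

theorem lipschitzWith_one_integral_indicator_one (hs : MeasurableSet s) (a : ℝ) :
    LipschitzWith 1 (fun x => ∫ t in a..x, s.indicator (1 : ℝ → ℝ) t) := by
  refine LipschitzWith.of_dist_le_mul fun x y => ?_
  have hbound : ∀ t, ‖s.indicator (1 : ℝ → ℝ) t‖ ≤ 1 := fun t =>
    (norm_indicator_le_norm_self 1 t).trans (by simp)
  rw [dist_eq_norm, intervalIntegral.integral_interval_sub_left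
    (intervalIntegrable_indicator_one hs a x) (intervalIntegrable_indicator_one hs a y),
    NNReal.coe_one, Real.dist_eq]
  exact intervalIntegral.norm_integral_le_of_norm_le_const fun t _ => hbound t

theorem hasDerivAt_integral_indicator_one_of_compl_mem_nhds (hs : MeasurableSet s) (a : ℝ)
    {x : ℝ} (hx : sᶜ ∈ 𝓝 x) :
    HasDerivAt (fun y => ∫ t in a..y, s.indicator (1 : ℝ → ℝ) t) 0 x := by
  have hzero : s.indicator (1 : ℝ → ℝ) =ᶠ[𝓝 x] fun _ => 0 :=
    eventually_of_mem hx fun t ht => indicator_of_notMem ht 1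
  simpa [indicator_of_notMem (mem_of_mem_nhds hx)] using
    intervalIntegral.integral_hasDerivAt_right
      (intervalIntegrable_indicator_one hs a x)
      ((measurable_one.indicator hs).stronglyMeasurable.stronglyMeasurableAtFilter)
      (continuousAt_const.congr hzero.symm)

theorem integral_indicator_one_of_le (hs : MeasurableSet s) {a b : ℝ} (hab : a ≤ b) :
    ∫ t in a..b, s.indicator (1 : ℝ → ℝ) t = volume.real (s ∩ Ioc a b) := by
  rw [intervalIntegral.integral_of_le hab, integral_indicator_one hs,
    measureReal_restrict_apply hs]

end IndicatorPrimitive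

/-- There is a Lipschitz function `f̂ : [0,1] → ℝ` with `f̂(0) < 0.0001` and
`f̂(1) > 0.9999` which has vanishing derivative on an open subset `𝒰` of `[0,1]`
that is dense in `[0,1]`.  In particular (by the fundamental theorem of calculus
for Lipschitz functions, `∫₀¹ f̂' = f̂(1) − f̂(0) > 0.9998`), the set `𝒰` does not
have full Lebesgue measure in `[0,1]`. -/
theorem lipschitz_devil_staircase :
    ∃ (fh : ℝ → ℝ) (L : NNReal), LipschitzOnWith L fh (Set.Icc 0 1) ∧
      fh 0 < 0.0001 ∧ fh 1 > 0.9999 ∧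
      ∃ U : Set ℝ, IsOpen U ∧ U ⊆ Set.Icc 0 1 ∧ Set.Icc (0 : ℝ) 1 ⊆ closure U ∧
        (∀ x ∈ U, HasDerivAt fh 0 x) ∧
        MeasureTheory.volume U < MeasureTheory.volume (Set.Icc (0 : ℝ) 1) := by
  obtain ⟨U, hU_open, hU_sub, hU_dense, hU_small⟩ :=
    exists_isOpen_subset_Ioo_dense_volume_lt zero_lt_one
      (ENNReal.ofReal_pos.2 (by norm_num : (0 : ℝ) < 0.0001))
  have hU_small' : volume.real U < 0.0001 := ENNReal.toReal_lt_of_lt_ofReal hU_small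
  have hUc : MeasurableSet Uᶜ := hU_open.measurableSet.compl
  have hF1 : ∫ t in 0..1, Uᶜ.indicator (1 : ℝ → ℝ) t = 1 - volume.real U := by
    rw [integral_indicator_one_of_le hUc zero_le_one, inter_comm, ← sdiff_eq,
      measureReal_sdiff (hU_sub.trans Ioo_subset_Ioc_self) hU_open.measurableSet
        measure_Ioc_lt_top.ne, Real.volume_real_Ioc_of_le zero_le_one, sub_zero]
  refine ⟨_, 1, (lipschitzWith_one_integral_indicator_one hUc 0).lipschitzOnWith,
    by norm_num, by rw [hF1]; linarith, U, hU_open, hU_sub.trans Ioo_subset_Icc_self, hU_dense,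
    fun x hx => hasDerivAt_integral_indicator_one_of_compl_mem_nhds hUc 0
      (by simpa using hU_open.mem_nhds hx), ?_⟩
  rw [Real.volume_Icc]
  exact hU_small.trans_le (ENNReal.ofReal_le_ofReal (by norm_num))
end

section
/- Let (V, g) be a globally hyperbolic time-oriented Lorentzian manifold with a Cauchy time function T (a smooth function with past-directed timelike gradient whose level sets are Cauchy hypersurfaces), and let h : V → ℝ be a smooth function with past-directed timelike gradient that agrees with T outside a region bounded in the past by a Cauchy hypersurface Σ₋ and in the future by a Cauchy hypersurface Σ₊. Then every nonempty level set of h is a Cauchy hypersurface, i.e. h is itself a Cauchy time function. -/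
/-! Along each curve `c`, the function `h ∘ c` is continuous and agrees with the strictly
increasing surjection `T ∘ c` near `±∞`, so it tends to `±∞` and is onto by the intermediate
value theorem; being strictly increasing, it takes each value exactly once. -/

open Filter Function

theorem Continuous.surjective_of_eventuallyEq_of_surjective
    {α β : Type*} [TopologicalSpace α] [ConditionallyCompleteLinearOrder α] [OrderTopology α]
    [DenselyOrdered α] [LinearOrder β] [TopologicalSpace β] [OrderClosedTopology β]
    {f g : α → β} (hf : Continuous f) (hg : Monotone g) (hgs : Surjective g)
    (hbot : g =ᶠ[atBot] f) (htop : g =ᶠ[atTop] f) : Surjective f :=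
  hf.surjective
    ((hg.tendsto_atTop_atTop fun b => (hgs b).imp fun _ h => h.ge).congr' htop)
    ((hg.tendsto_atBot_atBot fun b => (hgs b).imp fun _ h => h.le).congr' hbot)

theorem deformed_time_function_is_Cauchy_general
    {V : Type*} [TopologicalSpace V]
    (𝒞 : Set (ℝ → V)) (T h : V → ℝ)
    (hhcont : Continuous h)
    (hccont : ∀ c ∈ 𝒞, Continuous c)
    (hTmono : ∀ c ∈ 𝒞, StrictMono fun s => T (c s))
    (hTsurj : ∀ c ∈ 𝒞, Function.Surjective fun s => T (c s))
    (hhmono : ∀ c ∈ 𝒞, StrictMono fun s => h (c s))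
    (Sm Sp : Set V)
    (hSm : ∀ c ∈ 𝒞, ∃! s : ℝ, c s ∈ Sm)
    (hSp : ∀ c ∈ 𝒞, ∃! s : ℝ, c s ∈ Sp)
    (hpast : ∀ c ∈ 𝒞, ∀ s s' : ℝ, c s' ∈ Sm → s ≤ s' → h (c s) = T (c s))
    (hfut : ∀ c ∈ 𝒞, ∀ s s' : ℝ, c s' ∈ Sp → s' ≤ s → h (c s) = T (c s)) :
    ∀ r : ℝ, ∀ c ∈ 𝒞, ∃! s : ℝ, h (c s) = r := by
  intro r c hc
  obtain ⟨sm, hsm, -⟩ := hSm c hc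
  obtain ⟨sp, hsp, -⟩ := hSp c hc
  have hbot : (fun s => T (c s)) =ᶠ[atBot] fun s => h (c s) :=
    eventually_atBot.2 ⟨sm, fun s hs => (hpast c hc s sm hsm hs).symm⟩
  have htop : (fun s => T (c s)) =ᶠ[atTop] fun s => h (c s) :=
    eventually_atTop.2 ⟨sp, fun s hs => (hfut c hc s sp hsp hs).symm⟩
  have hsurj : Surjective fun s => h (c s) :=
    (hhcont.comp (hccont c hc)).surjective_of_eventuallyEq_of_surjective
      (hTmono c hc).monotone (hTsurj c hc) hbot htop
  exact (Bijective.existsUnique ⟨(hhmono c hc).injective, hsurj⟩) r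

/-- A deformed time function is again a Cauchy time function: let `V` be a (globally
hyperbolic, time-oriented Lorentzian) manifold, encoded here by its family `𝒞` of
inextendible future-directed timelike curves `c : ℝ → V`.  A subset `S` is a Cauchy
hypersurface iff every `c ∈ 𝒞` meets `S` exactly once.  Let `T` be a Cauchy time
function: `T` strictly increases along every `c ∈ 𝒞` (i.e. `grad T` is past-directed
timelike) and each of its level sets is a nonempty Cauchy hypersurface (encoded by
`T ∘ c` being surjective).  Let `h : V → ℝ` also strictly increase along every
`c ∈ 𝒞`, and suppose `h` agrees with `T` on the causal past of a Cauchy hypersurface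
`Sm` and on the causal future of a Cauchy hypersurface `Sp`.  Then every level set of
`h` is met exactly once by every `c ∈ 𝒞`, i.e. `h` is a Cauchy time function. -/
theorem deformed_time_function_is_Cauchy
    {V : Type*} [TopologicalSpace V]
    (𝒞 : Set (ℝ → V)) (T h : V → ℝ)
    (hTcont : Continuous T) (hhcont : Continuous h)
    (hccont : ∀ c ∈ 𝒞, Continuous c)
    (hTmono : ∀ c ∈ 𝒞, StrictMono fun s => T (c s))
    (hTsurj : ∀ c ∈ 𝒞, Function.Surjective fun s => T (c s))
    (hhmono : ∀ c ∈ 𝒞, StrictMono fun s => h (c s))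
    (Sm Sp : Set V)
    (hSm : ∀ c ∈ 𝒞, ∃! s : ℝ, c s ∈ Sm)
    (hSp : ∀ c ∈ 𝒞, ∃! s : ℝ, c s ∈ Sp)
    (hpast : ∀ c ∈ 𝒞, ∀ s s' : ℝ, c s' ∈ Sm → s ≤ s' → h (c s) = T (c s))
    (hfut : ∀ c ∈ 𝒞, ∀ s s' : ℝ, c s' ∈ Sp → s' ≤ s → h (c s) = T (c s)) :
    ∀ r : ℝ, ∀ c ∈ 𝒞, ∃! s : ℝ, h (c s) = r :=
  deformed_time_function_is_Cauchy_general 𝒞 T h hhcont hccont hTmono hTsurj hhmono Sm Sp hSm hSp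
    hpast hfut
end
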